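/- Let 0 < ε ≤ 1. Define G(ε,m,T) = (1/T)·ln((m²b⁴ + 2b² + m² + m(b² − 1)√C)/(2(1 + m²)b²)) − 2(m + ε), where b = e^{T√(1+m²)} and C = m²b⁴ + 2m²b² + 4b² + m² (the explicit expression for Δ(ε,m,T)). Then: (i) for every fixed m > 0, lim_{T→0⁺} G(ε,m,T) = −2ε; (ii) for every fixed T > 0, lim_{m→0⁺} G(ε,m,T) = −2ε and lim_{m→+∞} G(ε,m,T) = −2ε. -/

import Mathlib

/-!
Write `u = b² = exp (2 T √(1 + m²))`, so that `G = T⁻¹ log (logArg m u) - 2 (m + ε)` with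
`logArg m 1 = 1` and `logArg 0 u = 1`.

* As `T → 0⁺`, `T⁻¹ log (logArg m u)` is a difference quotient at `0` of
  `T ↦ log (logArg m (exp (2 T √(1 + m²))))`, whose derivative there is
  `(m / √(1 + m²)) · 2 √(1 + m²) = 2 m`; this cancels the `-2 m`.
* As `m → 0⁺`, `G` is continuous in `m` and `logArg 0 u = 1`.
* As `m → ∞`, also `u → ∞`, and `logArg m u / u → 1` as `m, u → ∞` jointly. Hence
  `T⁻¹ log (logArg m u) = T⁻¹ log (logArg m u / u) + 2 √(1 + m²)`, and `√(1 + m²) - m → 0`.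
-/

open Real Filter Set

/-- The explicit closed-form expression `G(ε,m,T)` for `Δ(ε,m,T)`. -/
noncomputable def Gval (ε m T : ℝ) : ℝ :=
  let b := Real.exp (T * Real.sqrt (1 + m ^ 2))
  let C := m ^ 2 * b ^ 4 + 2 * m ^ 2 * b ^ 2 + 4 * b ^ 2 + m ^ 2
  (1 / T) * Real.log ((m ^ 2 * b ^ 4 + 2 * b ^ 2 + m ^ 2 +
    m * (b ^ 2 - 1) * Real.sqrt C) / (2 * (1 + m ^ 2) * b ^ 2)) - 2 * (m + ε)

open Topology

lemma tendsto_inv_mul_log_of_hasDerivAt {g : ℝ → ℝ} {g' : ℝ} (hg : HasDerivAt g g' 0)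
    (hg0 : g 0 = 1) : Tendsto (fun T => T⁻¹ * log (g T)) (𝓝[≠] 0) (𝓝 g') := by
  have hlog : HasDerivAt (fun T => log (g T)) g' 0 := by
    simpa [hg0] using hg.log (by simp [hg0])
  simpa [hg0] using hlog.tendsto_slope_zero

lemma tendsto_sqrt_one_add_sq_sub_self_atTop :
    Tendsto (fun m : ℝ => √(1 + m ^ 2) - m) atTop (𝓝 0) := by
  have hinv (m : ℝ) : √(1 + m ^ 2) - m = (√(1 + m ^ 2) + m)⁻¹ := by
    refine eq_inv_of_mul_eq_one_left ?_
    rw [mul_comm, ← sq_sub_sq, sq_sqrt (by positivity)]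
    ring
  simp_rw [hinv]
  exact tendsto_inv_atTop_zero.comp
    (tendsto_atTop_mono (fun m => le_add_of_nonneg_left (sqrt_nonneg _)) tendsto_id)

noncomputable def logArg (m u : ℝ) : ℝ :=
  (m ^ 2 * u ^ 2 + 2 * u + m ^ 2 + m * (u - 1) * √(m ^ 2 * u ^ 2 + 2 * m ^ 2 * u + 4 * u + m ^ 2)) /
    (2 * (1 + m ^ 2) * u)

lemma Gval_eq (ε m T : ℝ) :
    Gval ε m T = T⁻¹ * log (logArg m (exp (2 * T * √(1 + m ^ 2)))) - 2 * (m + ε) := by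
  have hb : exp (2 * T * √(1 + m ^ 2)) = exp (T * √(1 + m ^ 2)) ^ 2 := by
    rw [← exp_nat_mul]; ring_nf
  rw [Gval, logArg, hb, one_div]
  ring_nf

lemma logArg_one (m : ℝ) : logArg m 1 = 1 := by
  rw [logArg]
  field_simp
  ring

lemma hasDerivAt_logArg_one (m : ℝ) : HasDerivAt (logArg m) (m / √(1 + m ^ 2)) 1 := by
  set s := √(1 + m ^ 2)
  have hs : 0 < s := sqrt_pos.mpr (by positivity)
  have hs2 : s ^ 2 = 1 + m ^ 2 := sq_sqrt (by positivity)
  have hC1 : √(m ^ 2 * 1 ^ 2 + 2 * m ^ 2 * 1 + 4 * 1 + m ^ 2) = 2 * s := by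
    rw [show m ^ 2 * 1 ^ 2 + 2 * m ^ 2 * 1 + 4 * 1 + m ^ 2 = (2 * s) ^ 2 by rw [mul_pow, hs2]; ring]
    exact sqrt_sq (by positivity)
  have hu : HasDerivAt (fun u : ℝ => u) 1 1 := hasDerivAt_id' 1
  have hC := ((((hu.fun_pow 2).const_mul (m ^ 2)).fun_add (hu.const_mul (2 * m ^ 2))).fun_add
    (hu.const_mul 4)).add_const (m ^ 2)
  have hsqrtC := hC.sqrt (by positivity)
  have hN := ((((hu.fun_pow 2).const_mul (m ^ 2)).fun_add (hu.const_mul 2)).add_const (m ^ 2)).fun_add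
    (((hu.sub_const 1).const_mul m).fun_mul hsqrtC)
  have hD := hu.const_mul (2 * (1 + m ^ 2))
  unfold logArg
  refine (hN.div hD (by positivity)).congr_deriv ?_
  rw [hC1]
  field_simp
  push_cast
  linear_combination 8 * m * hs2

lemma tendsto_Gval_T_nhdsGT_zero (ε m : ℝ) :
    Tendsto (fun T => Gval ε m T) (𝓝[>] 0) (𝓝 (-(2 * ε))) := by
  set s := √(1 + m ^ 2)
  have hs : 0 < s := sqrt_pos.mpr (by positivity)
  have hu : HasDerivAt (fun T => exp (2 * T * s)) (2 * s) 0 := by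
    simpa using (((hasDerivAt_id' (0 : ℝ)).const_mul 2).mul_const s).exp
  have hg : HasDerivAt (fun T => logArg m (exp (2 * T * s))) (2 * m) 0 := by
    refine ((hasDerivAt_logArg_one m).comp_of_eq 0 hu (by simp)).congr_deriv ?_
    field_simp
    rfl
  have hlim : Tendsto (fun T => T⁻¹ * log (logArg m (exp (2 * T * s)))) (𝓝[>] 0) (𝓝 (2 * m)) :=
    (tendsto_inv_mul_log_of_hasDerivAt hg (by simp [logArg_one])).mono_left
      (nhdsWithin_mono 0 fun _ hT => ne_of_gt hT)
  have hG := hlim.sub_const (2 * (m + ε))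
  rw [show 2 * m - 2 * (m + ε) = -(2 * ε) by ring] at hG
  simpa only [Gval_eq] using hG

lemma logArg_zero_left {u : ℝ} (hu : u ≠ 0) : logArg 0 u = 1 := by
  simp [logArg, hu]

lemma tendsto_Gval_m_nhds_zero (ε T : ℝ) :
    Tendsto (fun m => Gval ε m T) (𝓝 0) (𝓝 (-(2 * ε))) := by
  have h0 : logArg 0 (exp (2 * T)) = 1 := logArg_zero_left (exp_pos _).ne'
  have hcont : ContinuousAt (fun m => logArg m (exp (2 * T * √(1 + m ^ 2)))) 0 := by
    unfold logArg
    exact ContinuousAt.div (by fun_prop) (by fun_prop) (by positivity)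
  have hG : ContinuousAt
      (fun m => T⁻¹ * log (logArg m (exp (2 * T * √(1 + m ^ 2)))) - 2 * (m + ε)) 0 :=
    ((hcont.log (by simp [h0])).const_mul _).sub (by fun_prop)
  simp_rw [Gval_eq]
  convert hG.tendsto using 2
  simp [h0]

lemma logArg_div_self_eq {m u : ℝ} (hm : 0 < m) (hu : 0 < u) :
    logArg m u / u = (1 + 2 * u⁻¹ * m⁻¹ ^ 2 + u⁻¹ ^ 2 +
      (1 - u⁻¹) * √(1 + 2 * u⁻¹ + 4 * u⁻¹ * m⁻¹ ^ 2 + u⁻¹ ^ 2)) / (2 * (1 + m⁻¹ ^ 2)) := by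
  have hC : √(m ^ 2 * u ^ 2 + 2 * m ^ 2 * u + 4 * u + m ^ 2) =
      m * u * √(1 + 2 * u⁻¹ + 4 * u⁻¹ * m⁻¹ ^ 2 + u⁻¹ ^ 2) := by
    rw [← sqrt_sq (by positivity : 0 ≤ m * u), ← sqrt_mul (sq_nonneg _)]
    congr 1
    field_simp
  rw [logArg, hC]
  field_simp
  ring

lemma tendsto_logArg_div_self_atTop :
    Tendsto (fun p : ℝ × ℝ => logArg p.1 p.2 / p.2) (atTop ×ˢ atTop) (𝓝 1) := by
  set Ψ : ℝ × ℝ → ℝ := fun q => (1 + 2 * q.2 * q.1 ^ 2 + q.2 ^ 2 +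
      (1 - q.2) * √(1 + 2 * q.2 + 4 * q.2 * q.1 ^ 2 + q.2 ^ 2)) / (2 * (1 + q.1 ^ 2))
  have hΨ : Tendsto Ψ (𝓝 (0, 0)) (𝓝 1) := by
    have hcont : ContinuousAt Ψ (0, 0) :=
      ContinuousAt.div (by fun_prop) (by fun_prop) (by norm_num)
    simpa [Ψ] using hcont.tendsto
  have hinv : Tendsto (fun p : ℝ × ℝ => (p.1⁻¹, p.2⁻¹)) (atTop ×ˢ atTop) (𝓝 (0, 0)) :=
    (tendsto_inv_atTop_zero.comp tendsto_fst).prodMk_nhds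
      (tendsto_inv_atTop_zero.comp tendsto_snd)
  refine (hΨ.comp hinv).congr' ?_
  filter_upwards [prod_mem_prod (Ioi_mem_atTop 0) (Ioi_mem_atTop 0)] with ⟨m, u⟩ ⟨hm, hu⟩
  exact (logArg_div_self_eq hm hu).symm

lemma tendsto_Gval_m_atTop (ε : ℝ) {T : ℝ} (hT : 0 < T) :
    Tendsto (fun m => Gval ε m T) atTop (𝓝 (-(2 * ε))) := by
  have hs : Tendsto (fun m : ℝ => √(1 + m ^ 2)) atTop atTop :=
    tendsto_atTop_mono (fun m => (le_abs_self m).trans (abs_le_sqrt (by linarith))) tendsto_id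
  have hu : Tendsto (fun m => exp (2 * T * √(1 + m ^ 2))) atTop atTop :=
    tendsto_exp_atTop.comp (hs.const_mul_atTop (by positivity))
  have hratio : Tendsto
      (fun m => logArg m (exp (2 * T * √(1 + m ^ 2))) / exp (2 * T * √(1 + m ^ 2))) atTop (𝓝 1) := by
    simpa only [Function.comp_def, id] using
      tendsto_logArg_div_self_atTop.comp (tendsto_id.prodMk hu)
  have hlim : Tendsto (fun m => T⁻¹ * log (logArg m (exp (2 * T * √(1 + m ^ 2))) /
      exp (2 * T * √(1 + m ^ 2))) + 2 * (√(1 + m ^ 2) - m) - 2 * ε) atTop (𝓝 (-(2 * ε))) := by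
    simpa using (((hratio.log one_ne_zero).const_mul T⁻¹).add
      (tendsto_sqrt_one_add_sq_sub_self_atTop.const_mul 2)).sub_const (2 * ε)
  refine hlim.congr' ?_
  filter_upwards [hratio.eventually_ne one_ne_zero] with m hm
  rw [Gval_eq, log_div (div_ne_zero_iff.mp hm).1 (exp_pos _).ne', log_exp]
  field_simp
  ring

theorem statement11_general (ε : ℝ) :
    (∀ m : ℝ, 0 < m →
      Filter.Tendsto (fun T => Gval ε m T) (nhdsWithin 0 (Set.Ioi 0))
        (nhds (-(2 * ε)))) ∧
    (∀ T : ℝ, 0 < T →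
      Filter.Tendsto (fun m => Gval ε m T) (nhdsWithin 0 (Set.Ioi 0))
        (nhds (-(2 * ε))) ∧
      Filter.Tendsto (fun m => Gval ε m T) Filter.atTop (nhds (-(2 * ε)))) :=
  ⟨fun m _ => tendsto_Gval_T_nhdsGT_zero ε m,
    fun T hT => ⟨(tendsto_Gval_m_nhds_zero ε T).mono_left nhdsWithin_le_nhds,
      tendsto_Gval_m_atTop ε hT⟩⟩

theorem statement11 (ε : ℝ) (hε : 0 < ε) (hε1 : ε ≤ 1) :
    (∀ m : ℝ, 0 < m →
      Filter.Tendsto (fun T => Gval ε m T) (nhdsWithin 0 (Set.Ioi 0))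
        (nhds (-(2 * ε)))) ∧
    (∀ T : ℝ, 0 < T →
      Filter.Tendsto (fun m => Gval ε m T) (nhdsWithin 0 (Set.Ioi 0))
        (nhds (-(2 * ε))) ∧
      Filter.Tendsto (fun m => Gval ε m T) Filter.atTop (nhds (-(2 * ε)))) :=
  statement11_general ε
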